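/- For every integer K ≥ 1 and every p with 1 ≤ p ≤ ∞, the p-norm network distance d_{P,p} restricted to K-order proximity networks is a metric on the space of K-order proximity networks modulo isomorphism: it is nonnegative, symmetric, satisfies the triangle inequality, and d_{P,p}(P_X,P_Y) = 0 holds if and only if P_X and P_Y are isomorphic. -/

import Mathlib

open scoped ENNReal

/-- A correspondence between node sets `X` and `Y`: a set of pairs in which every
`x : X` and every `y : Y` appears. -/
def IsCorrespondence {X Y : Type} (C : Set (X × Y)) : Prop :=
  (∀ x : X, ∃ y : Y, (x, y) ∈ C) ∧ (∀ y : Y, ∃ x : X, (x, y) ∈ C)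

/-- The rank of a tuple: the number of distinct elements appearing in it. -/
noncomputable def tupleRank {X : Type} {n : ℕ} (t : Fin n → X) : ℕ :=
  Set.ncard (Set.range t)

/-- A `K`-order network on a finite nonempty node set `X`: relationship functions
`r k : X^{k+1} → [0,1]` for `0 ≤ k ≤ K`, symmetric under permutations of the arguments,
and such that any subtuple with the same set of distinct elements as the full tuple
carries the same relationship value. -/
structure HONetwork (K : ℕ) (X : Type) [Fintype X] [Nonempty X] : Type where
  r : ∀ k : ℕ, (Fin (k + 1) → X) → ℝ
  r_nonneg : ∀ k, k ≤ K → ∀ t : Fin (k + 1) → X, 0 ≤ r k t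
  r_le_one : ∀ k, k ≤ K → ∀ t : Fin (k + 1) → X, r k t ≤ 1
  symm : ∀ k, k ≤ K → ∀ (t : Fin (k + 1) → X) (σ : Equiv.Perm (Fin (k + 1))),
    r k (t ∘ σ) = r k t
  identity : ∀ k, k ≤ K → ∀ k', k' ≤ K → ∀ (t : Fin (k + 1) → X)
    (ι : Fin (k' + 1) → Fin (k + 1)), StrictMono ι →
    Set.range (t ∘ ι) = Set.range t → r k' (t ∘ ι) = r k t

/-- The `k`-order network difference `Γ^k_{X,Y}(C)`: the largest value of
`|r_X^k(x_{0:k}) − r_Y^k(y_{0:k})|` over tuples of pairs of correspondents in `C`. -/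
noncomputable def Gamma {K : ℕ} {X Y : Type} [Fintype X] [Nonempty X] [Fintype Y] [Nonempty Y]
    (NX : HONetwork K X) (NY : HONetwork K Y) (k : ℕ) (C : Set (X × Y)) : ℝ :=
  sSup { v : ℝ | ∃ (tx : Fin (k + 1) → X) (ty : Fin (k + 1) → Y),
    (∀ i, (tx i, ty i) ∈ C) ∧ v = |NX.r k tx - NY.r k ty| }

/-- The `k`-order network distance: minimum of `Γ^k_{X,Y}(C)` over correspondences `C`. -/
noncomputable def dN {K : ℕ} {X Y : Type} [Fintype X] [Nonempty X] [Fintype Y] [Nonempty Y]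
    (k : ℕ) (NX : HONetwork K X) (NY : HONetwork K Y) : ℝ :=
  sInf { v : ℝ | ∃ C : Set (X × Y), IsCorrespondence C ∧ v = Gamma NX NY k C }

/-- The `p`-norm of a vector in `ℝ^{K+1}`, `1 ≤ p ≤ ∞`. -/
noncomputable def pNorm (K : ℕ) (p : ℝ≥0∞) [Fact (1 ≤ p)] (v : Fin (K + 1) → ℝ) : ℝ :=
  ‖(WithLp.equiv p (Fin (K + 1) → ℝ)).symm v‖

/-- The `p`-norm network distance: minimum over correspondences `C` of the `p`-norm of the
vector `(Γ^0_{X,Y}(C), …, Γ^K_{X,Y}(C))`. -/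
noncomputable def dNp {K : ℕ} {X Y : Type} [Fintype X] [Nonempty X] [Fintype Y] [Nonempty Y]
    (p : ℝ≥0∞) [Fact (1 ≤ p)] (NX : HONetwork K X) (NY : HONetwork K Y) : ℝ :=
  sInf { v : ℝ | ∃ C : Set (X × Y), IsCorrespondence C ∧
    v = pNorm K p (fun k : Fin (K + 1) => Gamma NX NY (k : ℕ) C) }

/-- Two `K`-order networks are `k`-isomorphic if a bijection of the node sets preserves the
`k`-order relationship functions. -/
def kIsomorphic {K : ℕ} {X Y : Type} [Fintype X] [Nonempty X] [Fintype Y] [Nonempty Y]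
    (k : ℕ) (NX : HONetwork K X) (NY : HONetwork K Y) : Prop :=
  ∃ φ : X ≃ Y, ∀ t : Fin (k + 1) → X, NY.r k (fun i => φ (t i)) = NX.r k t

/-- Two `K`-order networks are isomorphic if a bijection of the node sets preserves the
`k`-order relationship functions for all `0 ≤ k ≤ K`. -/
def Isomorphic {K : ℕ} {X Y : Type} [Fintype X] [Nonempty X] [Fintype Y] [Nonempty Y]
    (NX : HONetwork K X) (NY : HONetwork K Y) : Prop :=
  ∃ φ : X ≃ Y, ∀ k, k ≤ K → ∀ t : Fin (k + 1) → X, NY.r k (fun i => φ (t i)) = NX.r k t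

/-- A `K`-order dissimilarity network: a `K`-order network whose relationship functions
decompose as `r^k = d^k + ε · rank`, with nonnegative dissimilarity functions `d^k`
satisfying the order increasing property, and `0 < ε ≤ 1 − (1/K) · max d^K`. -/
structure DissimNetwork (K : ℕ) (X : Type) [Fintype X] [Nonempty X]
    extends HONetwork K X where
  dfun : ∀ k : ℕ, (Fin (k + 1) → X) → ℝ
  eps : ℝ
  dfun_nonneg : ∀ k, k ≤ K → ∀ t : Fin (k + 1) → X, 0 ≤ dfun k t
  decomp : ∀ k, k ≤ K → ∀ t : Fin (k + 1) → X,
    r k t = dfun k t + eps * (tupleRank t : ℝ)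
  order_incr : ∀ k : ℕ, k + 1 ≤ K → ∀ t : Fin (k + 2) → X,
    dfun k (fun i : Fin (k + 1) => t i.castSucc) ≤ dfun (k + 1) t
  eps_pos : 0 < eps
  eps_le : ∀ t : Fin (K + 1) → X, eps ≤ 1 - (1 / (K : ℝ)) * dfun K t

/-- A `K`-order proximity network: a `K`-order network whose relationship functions
decompose as `r^k = p^k − ε · rank`, with nonnegative proximity functions `p^k`
satisfying the order decreasing property, and `0 < ε ≤ (1/K) · min p^K`. -/
structure ProxNetwork (K : ℕ) (X : Type) [Fintype X] [Nonempty X]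
    extends HONetwork K X where
  pfun : ∀ k : ℕ, (Fin (k + 1) → X) → ℝ
  eps : ℝ
  pfun_nonneg : ∀ k, k ≤ K → ∀ t : Fin (k + 1) → X, 0 ≤ pfun k t
  decomp : ∀ k, k ≤ K → ∀ t : Fin (k + 1) → X,
    r k t = pfun k t - eps * (tupleRank t : ℝ)
  order_decr : ∀ k : ℕ, k + 1 ≤ K → ∀ t : Fin (k + 2) → X,
    pfun (k + 1) t ≤ pfun k (fun i : Fin (k + 1) => t i.castSucc)
  eps_pos : 0 < eps
  eps_le : ∀ t : Fin (K + 1) → X, eps ≤ (1 / (K : ℝ)) * pfun K t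


section Aux

variable {K : ℕ} {X Y Z : Type} [Fintype X] [Nonempty X] [Fintype Y] [Nonempty Y]
  [Fintype Z] [Nonempty Z]

/-- The set whose supremum defines `Gamma`. -/
def gammaSet (NX : HONetwork K X) (NY : HONetwork K Y) (k : ℕ) (C : Set (X × Y)) : Set ℝ :=
  { v : ℝ | ∃ (tx : Fin (k + 1) → X) (ty : Fin (k + 1) → Y),
    (∀ i, (tx i, ty i) ∈ C) ∧ v = |NX.r k tx - NY.r k ty| }

lemma Gamma_eq (NX : HONetwork K X) (NY : HONetwork K Y) (k : ℕ) (C : Set (X × Y)) :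
    Gamma NX NY k C = sSup (gammaSet NX NY k C) := rfl

lemma gammaSet_finite (NX : HONetwork K X) (NY : HONetwork K Y) (k : ℕ) (C : Set (X × Y)) :
    (gammaSet NX NY k C).Finite := by
  apply Set.Finite.subset (Set.finite_range
    (fun q : (Fin (k + 1) → X) × (Fin (k + 1) → Y) => |NX.r k q.1 - NY.r k q.2|))
  rintro v ⟨tx, ty, -, rfl⟩
  exact ⟨(tx, ty), rfl⟩

lemma gammaSet_nonempty (NX : HONetwork K X) (NY : HONetwork K Y) (k : ℕ) {C : Set (X × Y)}
    (hC : IsCorrespondence C) : (gammaSet NX NY k C).Nonempty := by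
  obtain ⟨x⟩ := ‹Nonempty X›
  obtain ⟨y, hy⟩ := hC.1 x
  exact ⟨_, fun _ => x, fun _ => y, fun _ => hy, rfl⟩

lemma le_Gamma (NX : HONetwork K X) (NY : HONetwork K Y) (k : ℕ) {C : Set (X × Y)}
    {tx : Fin (k + 1) → X} {ty : Fin (k + 1) → Y} (h : ∀ i, (tx i, ty i) ∈ C) :
    |NX.r k tx - NY.r k ty| ≤ Gamma NX NY k C :=
  le_csSup (gammaSet_finite NX NY k C).bddAbove ⟨tx, ty, h, rfl⟩

lemma Gamma_nonneg (NX : HONetwork K X) (NY : HONetwork K Y) (k : ℕ) {C : Set (X × Y)}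
    (hC : IsCorrespondence C) : 0 ≤ Gamma NX NY k C := by
  obtain ⟨x⟩ := ‹Nonempty X›
  obtain ⟨y, hy⟩ := hC.1 x
  exact le_trans (abs_nonneg _) (le_Gamma NX NY k (tx := fun _ => x) (ty := fun _ => y)
    fun _ => hy)

lemma Gamma_le (NX : HONetwork K X) (NY : HONetwork K Y) (k : ℕ) {C : Set (X × Y)}
    (hC : IsCorrespondence C) {b : ℝ}
    (hb : ∀ (tx : Fin (k + 1) → X) (ty : Fin (k + 1) → Y),
      (∀ i, (tx i, ty i) ∈ C) → |NX.r k tx - NY.r k ty| ≤ b) :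
    Gamma NX NY k C ≤ b := by
  apply csSup_le (gammaSet_nonempty NX NY k hC)
  rintro v ⟨tx, ty, h, rfl⟩
  exact hb tx ty h

lemma pNorm_zero (p : ℝ≥0∞) [Fact (1 ≤ p)] : pNorm K p 0 = 0 := by
  unfold pNorm
  rw [WithLp.equiv_symm_apply, WithLp.toLp_zero, norm_zero]

lemma pNorm_eq_zero {p : ℝ≥0∞} [Fact (1 ≤ p)] {v : Fin (K + 1) → ℝ}
    (h : pNorm K p v = 0) : v = 0 := by
  unfold pNorm at h
  rw [norm_eq_zero] at h
  have := congrArg (WithLp.equiv p (Fin (K + 1) → ℝ)) h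
  simpa using this

lemma pNorm_add_le (p : ℝ≥0∞) [Fact (1 ≤ p)] (u v : Fin (K + 1) → ℝ) :
    pNorm K p (u + v) ≤ pNorm K p u + pNorm K p v := by
  unfold pNorm
  rw [WithLp.equiv_symm_apply, WithLp.toLp_add]
  exact norm_add_le _ _

lemma pNorm_mono (p : ℝ≥0∞) [Fact (1 ≤ p)] {u v : Fin (K + 1) → ℝ}
    (hu : ∀ i, 0 ≤ u i) (huv : ∀ i, u i ≤ v i) : pNorm K p u ≤ pNorm K p v := by
  unfold pNorm
  have key : ∀ i : Fin (K + 1),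
      ‖((WithLp.equiv p (Fin (K + 1) → ℝ)).symm u) i‖ ≤
      ‖((WithLp.equiv p (Fin (K + 1) → ℝ)).symm v) i‖ := by
    intro i
    simp only [WithLp.equiv_symm_apply, WithLp.ofLp_toLp, Real.norm_eq_abs]
    rw [abs_of_nonneg (hu i), abs_of_nonneg ((hu i).trans (huv i))]
    exact huv i
  rcases eq_or_ne p ∞ with rfl | hp
  · rw [PiLp.norm_eq_ciSup, PiLp.norm_eq_ciSup]
    exact ciSup_mono (Set.Finite.bddAbove (Set.finite_range _)) key
  · have hp0 : p ≠ 0 := by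
      have h1 : (1 : ℝ≥0∞) ≤ p := Fact.out
      intro h; rw [h] at h1; simp at h1
    have hpt : 0 < p.toReal := ENNReal.toReal_pos hp0 hp
    rw [PiLp.norm_eq_sum hpt, PiLp.norm_eq_sum hpt]
    apply Real.rpow_le_rpow
    · exact Finset.sum_nonneg fun i _ => Real.rpow_nonneg (norm_nonneg _) _
    · exact Finset.sum_le_sum fun i _ => Real.rpow_le_rpow (norm_nonneg _) (key i) hpt.le
    · positivity

/-- The set whose infimum defines `dNp`. -/
def dNpSet (p : ℝ≥0∞) [Fact (1 ≤ p)] (NX : HONetwork K X) (NY : HONetwork K Y) : Set ℝ :=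
  { v : ℝ | ∃ C : Set (X × Y), IsCorrespondence C ∧
    v = pNorm K p (fun k : Fin (K + 1) => Gamma NX NY (k : ℕ) C) }

lemma dNp_eq (p : ℝ≥0∞) [Fact (1 ≤ p)] (NX : HONetwork K X) (NY : HONetwork K Y) :
    dNp p NX NY = sInf (dNpSet p NX NY) := rfl

lemma dNpSet_finite (p : ℝ≥0∞) [Fact (1 ≤ p)] (NX : HONetwork K X) (NY : HONetwork K Y) :
    (dNpSet p NX NY).Finite := by
  apply Set.Finite.subset (Set.finite_range
    (fun C : Set (X × Y) => pNorm K p (fun k : Fin (K + 1) => Gamma NX NY (k : ℕ) C)))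
  rintro v ⟨C, -, rfl⟩
  exact ⟨C, rfl⟩

lemma dNpSet_nonempty (p : ℝ≥0∞) [Fact (1 ≤ p)] (NX : HONetwork K X) (NY : HONetwork K Y) :
    (dNpSet p NX NY).Nonempty := by
  refine ⟨_, Set.univ, ⟨fun x => ⟨Classical.arbitrary Y, trivial⟩,
    fun y => ⟨Classical.arbitrary X, trivial⟩⟩, rfl⟩

lemma dNp_nonneg (p : ℝ≥0∞) [Fact (1 ≤ p)] (NX : HONetwork K X) (NY : HONetwork K Y) :
    0 ≤ dNp p NX NY := by
  rw [dNp_eq]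
  apply le_csInf (dNpSet_nonempty p NX NY)
  rintro v ⟨C, -, rfl⟩
  exact norm_nonneg _

lemma dNp_le (p : ℝ≥0∞) [Fact (1 ≤ p)] (NX : HONetwork K X) (NY : HONetwork K Y)
    {C : Set (X × Y)} (hC : IsCorrespondence C) :
    dNp p NX NY ≤ pNorm K p (fun k : Fin (K + 1) => Gamma NX NY (k : ℕ) C) := by
  rw [dNp_eq]
  exact csInf_le (dNpSet_finite p NX NY).bddBelow ⟨C, hC, rfl⟩

lemma dNp_exists (p : ℝ≥0∞) [Fact (1 ≤ p)] (NX : HONetwork K X) (NY : HONetwork K Y) :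
    ∃ C : Set (X × Y), IsCorrespondence C ∧
      dNp p NX NY = pNorm K p (fun k : Fin (K + 1) => Gamma NX NY (k : ℕ) C) := by
  have := (dNpSet_nonempty p NX NY).csInf_mem (dNpSet_finite p NX NY)
  rw [← dNp_eq] at this
  exact this

lemma dNpSet_subset (p : ℝ≥0∞) [Fact (1 ≤ p)] (NX : HONetwork K X) (NY : HONetwork K Y) :
    dNpSet p NX NY ⊆ dNpSet p NY NX := by
  rintro v ⟨C, hC, rfl⟩
  refine ⟨{q : Y × X | (q.2, q.1) ∈ C},
    ⟨fun y => (hC.2 y).imp fun x h => h, fun x => (hC.1 x).imp fun y h => h⟩, ?_⟩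
  congr 1
  funext k
  rw [Gamma_eq, Gamma_eq]
  congr 1
  ext v
  constructor
  · rintro ⟨tx, ty, h, rfl⟩
    exact ⟨ty, tx, h, abs_sub_comm _ _⟩
  · rintro ⟨ty, tx, h, rfl⟩
    exact ⟨tx, ty, h, abs_sub_comm _ _⟩

lemma tupleRank_const (x : X) {n : ℕ} : tupleRank (fun _ : Fin (n + 1) => x) = 1 := by
  unfold tupleRank
  rw [Set.range_const]
  exact Set.ncard_singleton x

lemma tupleRank_pair {a b : X} (h : a ≠ b) : tupleRank ![a, b] = 2 := by
  unfold tupleRank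
  rw [Matrix.range_cons_cons_empty]
  exact Set.ncard_pair h

lemma r_one_const (N : HONetwork K X) (hK : 1 ≤ K) (x : X) :
    N.r 1 (fun _ => x) = N.r 0 (fun _ => x) := by
  have hsm : StrictMono (fun _ : Fin 1 => (0 : Fin 2)) := by
    intro i j hij
    have hi := i.isLt
    have hj := j.isLt
    have := Fin.lt_def.mp hij
    omega
  have := N.identity 1 hK 0 (by omega) (fun _ => x) (fun _ : Fin 1 => (0 : Fin 2)) hsm (by
    show Set.range (fun _ : Fin 1 => x) = Set.range (fun _ : Fin 2 => x)
    rw [Set.range_const, Set.range_const])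
  exact this.symm

/-- In a proximity network (with `K ≥ 1`), if `r¹(a,b) = r⁰(a)` then `a = b`. -/
lemma prox_eq (P : ProxNetwork K X) (hK : 1 ≤ K) {a b : X}
    (h : P.r 1 ![a, b] = P.r 0 (fun _ => a)) : a = b := by
  by_contra hne
  have hd1 := P.decomp 1 hK ![a, b]
  have hd0 := P.decomp 0 (by omega) (fun _ => a)
  rw [tupleRank_pair hne] at hd1
  rw [tupleRank_const] at hd0
  have hod := P.order_decr 0 hK ![a, b]
  have hfe : (fun i : Fin 1 => (![a, b] : Fin 2 → X) i.castSucc) = fun _ : Fin 1 => a := by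
    funext i
    have : i = 0 := Subsingleton.elim _ _
    subst this
    rfl
  rw [hfe] at hod
  have heps := P.eps_pos
  rw [hd1, hd0] at h
  push_cast at h
  linarith

end Aux

/-- for `K ≥ 1` and `1 ≤ p ≤ ∞`, the `p`-norm network distance restricted to
`K`-order proximity networks is a metric modulo isomorphism. -/
theorem dPp_metric (K : ℕ) (hK : 1 ≤ K) (p : ℝ≥0∞) [Fact (1 ≤ p)]
    (X Y Z : Type) [Fintype X] [Nonempty X] [Fintype Y] [Nonempty Y] [Fintype Z] [Nonempty Z]
    (PX : ProxNetwork K X) (PY : ProxNetwork K Y) (PZ : ProxNetwork K Z) :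
    0 ≤ dNp p PX.toHONetwork PY.toHONetwork ∧
    dNp p PX.toHONetwork PY.toHONetwork = dNp p PY.toHONetwork PX.toHONetwork ∧
    dNp p PX.toHONetwork PY.toHONetwork ≤
      dNp p PX.toHONetwork PZ.toHONetwork + dNp p PZ.toHONetwork PY.toHONetwork ∧
    (dNp p PX.toHONetwork PY.toHONetwork = 0 ↔
      Isomorphic PX.toHONetwork PY.toHONetwork) := by
  -- unpack networks
  set NX := PX.toHONetwork
  set NY := PY.toHONetwork
  set NZ := PZ.toHONetwork
  refine ⟨dNp_nonneg p NX NY, ?_, ?_, ?_⟩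
  · -- symmetry
    rw [dNp_eq, dNp_eq]
    congr 1
    exact le_antisymm (dNpSet_subset p NX NY) (dNpSet_subset p NY NX)
  · -- triangle inequality
    obtain ⟨C1, hC1, h1⟩ := dNp_exists p NX NZ
    obtain ⟨C2, hC2, h2⟩ := dNp_exists p NZ NY
    set C : Set (X × Y) := {q : X × Y | ∃ z : Z, (q.1, z) ∈ C1 ∧ (z, q.2) ∈ C2} with hCdef
    have hC : IsCorrespondence C := by
      constructor
      · intro x
        obtain ⟨z, hz⟩ := hC1.1 x
        obtain ⟨y, hy⟩ := hC2.1 z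
        exact ⟨y, z, hz, hy⟩
      · intro y
        obtain ⟨z, hz⟩ := hC2.2 y
        obtain ⟨x, hx⟩ := hC1.2 z
        exact ⟨x, z, hx, hz⟩
    have hGam : ∀ k : ℕ, Gamma NX NY k C ≤ Gamma NX NZ k C1 + Gamma NZ NY k C2 := by
      intro k
      apply Gamma_le NX NY k hC
      intro tx ty h
      set tz : Fin (k + 1) → Z := fun i => (h i).choose with htz
      have hz1 : ∀ i, (tx i, tz i) ∈ C1 := fun i => (h i).choose_spec.1
      have hz2 : ∀ i, (tz i, ty i) ∈ C2 := fun i => (h i).choose_spec.2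
      calc |NX.r k tx - NY.r k ty|
          ≤ |NX.r k tx - NZ.r k tz| + |NZ.r k tz - NY.r k ty| := abs_sub_le _ _ _
        _ ≤ Gamma NX NZ k C1 + Gamma NZ NY k C2 :=
            add_le_add (le_Gamma NX NZ k hz1) (le_Gamma NZ NY k hz2)
    calc dNp p NX NY ≤ pNorm K p (fun k : Fin (K + 1) => Gamma NX NY (k : ℕ) C) :=
          dNp_le p NX NY hC
      _ ≤ pNorm K p ((fun k : Fin (K + 1) => Gamma NX NZ (k : ℕ) C1) +
            (fun k : Fin (K + 1) => Gamma NZ NY (k : ℕ) C2)) := by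
          apply pNorm_mono p (fun k => Gamma_nonneg NX NY _ hC)
          intro k
          exact hGam k
      _ ≤ pNorm K p (fun k : Fin (K + 1) => Gamma NX NZ (k : ℕ) C1) +
            pNorm K p (fun k : Fin (K + 1) => Gamma NZ NY (k : ℕ) C2) :=
          pNorm_add_le p _ _
      _ = dNp p NX NZ + dNp p NZ NY := by rw [h1, h2]
  · -- identity of indiscernibles
    constructor
    case mp =>
      intro h0
      obtain ⟨C, hC, hmin⟩ := dNp_exists p NX NY
      rw [h0] at hmin
      have hvec := pNorm_eq_zero hmin.symm
      have hGam0 : ∀ k : ℕ, k ≤ K → Gamma NX NY k C = 0 := by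
        intro k hk
        have := congrFun hvec ⟨k, by omega⟩
        simpa using this
      have hrel : ∀ k : ℕ, k ≤ K → ∀ (tx : Fin (k + 1) → X) (ty : Fin (k + 1) → Y),
          (∀ i, (tx i, ty i) ∈ C) → NX.r k tx = NY.r k ty := by
        intro k hk tx ty h
        have h1 := le_Gamma NX NY k h
        rw [hGam0 k hk] at h1
        have := abs_nonpos_iff.mp h1
        linarith [sub_eq_zero.mp this]
      have hY : ∀ (x : X) (y y' : Y), (x, y) ∈ C → (x, y') ∈ C → y = y' := by
        intro x y y' hxy hxy'
        apply prox_eq PY hK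
        have e1 : NX.r 1 (fun _ => x) = NY.r 1 ![y, y'] := by
          apply hrel 1 hK
          intro i
          fin_cases i <;> simpa
        have e0 : NX.r 0 (fun _ => x) = NY.r 0 (fun _ => y) := by
          apply hrel 0 (by omega)
          intro i
          simpa
        have e2 : NX.r 1 (fun _ => x) = NX.r 0 (fun _ => x) := r_one_const NX hK x
        show NY.r 1 ![y, y'] = NY.r 0 (fun _ => y)
        rw [← e1, e2, e0]
      have hX : ∀ (x x' : X) (y : Y), (x, y) ∈ C → (x', y) ∈ C → x = x' := by
        intro x x' y hxy hx'y
        apply prox_eq PX hK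
        have e1 : NX.r 1 ![x, x'] = NY.r 1 (fun _ => y) := by
          apply hrel 1 hK
          intro i
          fin_cases i <;> simpa
        have e0 : NX.r 0 (fun _ => x) = NY.r 0 (fun _ => y) := by
          apply hrel 0 (by omega)
          intro i
          simpa
        have e2 : NY.r 1 (fun _ => y) = NY.r 0 (fun _ => y) := r_one_const NY hK y
        show NX.r 1 ![x, x'] = NX.r 0 (fun _ => x)
        rw [e1, e2, ← e0]
      set f : X → Y := fun x => (hC.1 x).choose with hf
      have hfC : ∀ x, (x, f x) ∈ C := fun x => (hC.1 x).choose_spec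
      set g : Y → X := fun y => (hC.2 y).choose with hg
      have hgC : ∀ y, (g y, y) ∈ C := fun y => (hC.2 y).choose_spec
      have hleft : ∀ x, g (f x) = x := fun x => hX _ _ _ (hgC (f x)) (hfC x)
      have hright : ∀ y, f (g y) = y := fun y => (hY _ _ _ (hgC y) (hfC (g y))).symm
      refine ⟨⟨f, g, hleft, hright⟩, ?_⟩
      intro k hk t
      exact (hrel k hk t (fun i => f (t i)) (fun i => hfC (t i))).symm
    · rintro ⟨φ, hφ⟩
      set C : Set (X × Y) := Set.range (fun x => (x, φ x)) with hCdef
      have hC : IsCorrespondence C :=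
        ⟨fun x => ⟨φ x, x, rfl⟩, fun y => ⟨φ.symm y, φ.symm y, by simp⟩⟩
      have hGam : ∀ k : ℕ, k ≤ K → Gamma NX NY k C = 0 := by
        intro k hk
        apply le_antisymm _ (Gamma_nonneg NX NY k hC)
        apply Gamma_le NX NY k hC
        intro tx ty h
        have hty : ty = fun i => φ (tx i) := by
          funext i
          obtain ⟨x, hx⟩ := h i
          have hx1 : x = tx i := congrArg Prod.fst hx
          have hx2 : φ x = ty i := congrArg Prod.snd hx
          rw [← hx2, hx1]
        rw [hty, hφ k hk tx, sub_self, abs_zero]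
      have hzero : (fun k : Fin (K + 1) => Gamma NX NY (k : ℕ) C) = 0 := by
        funext k
        exact hGam k (by omega)
      have hle := dNp_le p NX NY hC
      rw [hzero, pNorm_zero] at hle
      exact le_antisymm hle (dNp_nonneg p NX NY)
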